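/- arXiv:2207.03369 — 2 statements merged into one kernel-verified Lean document; each statement's English description precedes it below -/
import Mathlib

section
/- Suppose (L,σ) ∈ C¹(𝒢,iso(𝒩)) × C²(𝒢,𝒩) satisfies only the twisted action condition (F1) (not necessarily (F2)). Then for every composable triple (x,y,z), the element χ(x,y,z) := L_x(σ(y,z))σ(x,yz)σ(xy,z)⁻¹σ(x,y)⁻¹ lies in the center Z(N_{r(x)}). -/
/-- A groupoid over a unit space `U`, with a total (junk-valued outside composables)
multiplication. `e : U → G` is the inclusion of units. -/
structure Gpd (G U : Type) where
  s : G → U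
  r : G → U
  e : U → G
  mul : G → G → G
  inv : G → G
  s_e : ∀ u, s (e u) = u
  r_e : ∀ u, r (e u) = u
  e_mul : ∀ x, mul (e (r x)) x = x
  mul_e : ∀ x, mul x (e (s x)) = x
  s_inv : ∀ x, s (inv x) = r x
  r_inv : ∀ x, r (inv x) = s x
  inv_mul : ∀ x, mul (inv x) x = e (s x)
  mul_inv : ∀ x, mul x (inv x) = e (r x)
  r_mul : ∀ x y, s x = r y → r (mul x y) = r x
  s_mul : ∀ x y, s x = r y → s (mul x y) = s y
  assoc : ∀ x y z, s x = r y → s y = r z → mul (mul x y) z = mul x (mul y z)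

/-- A group bundle over `U`: a total space `N` with projection `p`, each fiber being a group
(operations are total, with group laws holding fiberwise). -/
structure GrpBundle (N U : Type) where
  p : N → U
  one : U → N
  mul : N → N → N
  inv : N → N
  p_one : ∀ u, p (one u) = u
  p_mul : ∀ n m, p n = p m → p (mul n m) = p n
  p_inv : ∀ n, p (inv n) = p n
  one_mul : ∀ n, mul (one (p n)) n = n
  mul_one : ∀ n, mul n (one (p n)) = n
  inv_mul : ∀ n, mul (inv n) n = one (p n)
  mul_inv : ∀ n, mul n (inv n) = one (p n)
  assoc : ∀ a b c, p a = p b → p b = p c → mul (mul a b) c = mul a (mul b c)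

/-- A pair `(L, σ)` satisfying all the conditions of a factor system for `(𝒢, 𝒩)` except
possibly the twisted cocycle condition (F2): `L` is a family of fiberwise group isomorphisms
`L x : N_{s x} → N_{r x}`, trivial on units, and `σ : 𝒢⁽²⁾ → 𝒩` is normalized with
`σ (x, y) ∈ N_{r x}`, satisfying the twisted action condition (F1). -/
structure PreFS {G U N : Type} (𝒢 : Gpd G U) (𝒩 : GrpBundle N U) where
  L : G → N → N
  σ : G → G → N
  L_fib : ∀ x n, 𝒩.p n = 𝒢.s x → 𝒩.p (L x n) = 𝒢.r x
  L_mul : ∀ x n m, 𝒩.p n = 𝒢.s x → 𝒩.p m = 𝒢.s x →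
    L x (𝒩.mul n m) = 𝒩.mul (L x n) (L x m)
  L_bij : ∀ x, Set.BijOn (L x) {n | 𝒩.p n = 𝒢.s x} {n | 𝒩.p n = 𝒢.r x}
  L_e : ∀ u n, 𝒩.p n = u → L (𝒢.e u) n = n
  σ_fib : ∀ x y, 𝒢.s x = 𝒢.r y → 𝒩.p (σ x y) = 𝒢.r x
  σ_e_left : ∀ x, σ (𝒢.e (𝒢.r x)) x = 𝒩.one (𝒢.r x)
  σ_e_right : ∀ x, σ x (𝒢.e (𝒢.s x)) = 𝒩.one (𝒢.r x)
  F1 : ∀ x y n, 𝒢.s x = 𝒢.r y → 𝒩.p n = 𝒢.s y →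
    L x (L y n) = 𝒩.mul (𝒩.mul (σ x y) (L (𝒢.mul x y) n)) (𝒩.inv (σ x y))

/-- A factor system `(L, σ)` for `(𝒢, 𝒩)`: conditions (F1) and (F2). -/
structure FS {G U N : Type} (𝒢 : Gpd G U) (𝒩 : GrpBundle N U) extends PreFS 𝒢 𝒩 where
  F2 : ∀ x y z, 𝒢.s x = 𝒢.r y → 𝒢.s y = 𝒢.r z →
    𝒩.mul (σ x y) (σ (𝒢.mul x y) z) = 𝒩.mul (L x (σ y z)) (σ x (𝒢.mul y z))

/-- `χ_{(L,σ)}(x,y,z) = L_x(σ(y,z)) σ(x,yz) σ(xy,z)⁻¹ σ(x,y)⁻¹`. -/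
def chi {G U N : Type} (𝒢 : Gpd G U) (𝒩 : GrpBundle N U)
    (L : G → N → N) (σ : G → G → N) (x y z : G) : N :=
  𝒩.mul (𝒩.mul (𝒩.mul (L x (σ y z)) (σ x (𝒢.mul y z)))
    (𝒩.inv (σ (𝒢.mul x y) z))) (𝒩.inv (σ x y))

/-
Expanding `L_x L_y L_z` by (F1) along the two bracketings `(xy)z` and `x(yz)` shows that
conjugation by `σ(x,y)σ(xy,z)` and by `L_x(σ(y,z))σ(x,yz)` agree on the image of `L_{xyz}`,
which is all of `N_{r(x)}`. Two elements inducing the same inner automorphism differ by a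
central element, and that element is `χ(x,y,z)`.
-/

theorem mul_inv_mem_center_of_forall_conj_eq {H : Type*} [Group H] {g k : H}
    (h : ∀ m, g * m * g⁻¹ = k * m * k⁻¹) : g * k⁻¹ ∈ Subgroup.center H := by
  refine Subgroup.mem_center_iff.mpr fun m => ?_
  have hm := h (k⁻¹ * m * k)
  calc m * (g * k⁻¹) = k * (k⁻¹ * m * k) * k⁻¹ * (g * k⁻¹) := by group
    _ = g * (k⁻¹ * m * k) * g⁻¹ * (g * k⁻¹) := by rw [hm]
    _ = g * k⁻¹ * m := by group

namespace GrpBundle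

variable {N U : Type} (𝒩 : GrpBundle N U)

def Fiber (u : U) : Type := {n : N // 𝒩.p n = u}

instance (u : U) : Group (𝒩.Fiber u) where
  mul a b := ⟨𝒩.mul a.1 b.1, (𝒩.p_mul a.1 b.1 (a.2.trans b.2.symm)).trans a.2⟩
  one := ⟨𝒩.one u, 𝒩.p_one u⟩
  inv a := ⟨𝒩.inv a.1, (𝒩.p_inv a.1).trans a.2⟩
  mul_assoc a b c := Subtype.ext (𝒩.assoc a.1 b.1 c.1 (a.2.trans b.2.symm) (b.2.trans c.2.symm))
  one_mul a := Subtype.ext <| by have h := 𝒩.one_mul a.1; rwa [a.2] at h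
  mul_one a := Subtype.ext <| by have h := 𝒩.mul_one a.1; rwa [a.2] at h
  inv_mul_cancel a := Subtype.ext <| by have h := 𝒩.inv_mul a.1; rwa [a.2] at h

def conj (a n : N) : N := 𝒩.mul (𝒩.mul a n) (𝒩.inv a)

variable {𝒩}

theorem commute_of_forall_conj_conj_eq {u : U} {a b c d : N} (ha : 𝒩.p a = u)
    (hb : 𝒩.p b = u) (hc : 𝒩.p c = u) (hd : 𝒩.p d = u)
    (h : ∀ n, 𝒩.p n = u → 𝒩.conj a (𝒩.conj b n) = 𝒩.conj d (𝒩.conj c n)) (m : N)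
    (hm : 𝒩.p m = u) :
    𝒩.mul (𝒩.mul (𝒩.mul (𝒩.mul a b) (𝒩.inv c)) (𝒩.inv d)) m =
      𝒩.mul m (𝒩.mul (𝒩.mul (𝒩.mul a b) (𝒩.inv c)) (𝒩.inv d)) := by
  let A : 𝒩.Fiber u := ⟨a, ha⟩
  let B : 𝒩.Fiber u := ⟨b, hb⟩
  let C : 𝒩.Fiber u := ⟨c, hc⟩
  let D : 𝒩.Fiber u := ⟨d, hd⟩
  have hconj : ∀ M, A * B * M * (A * B)⁻¹ = D * C * M * (D * C)⁻¹ := fun M => by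
    have hM : A * (B * M * B⁻¹) * A⁻¹ = D * (C * M * C⁻¹) * D⁻¹ := Subtype.ext (h M.1 M.2)
    simpa only [mul_inv_rev, mul_assoc] using hM
  let M : 𝒩.Fiber u := ⟨m, hm⟩
  have hcenter : M * (A * B * C⁻¹ * D⁻¹) = A * B * C⁻¹ * D⁻¹ * M := by
    simpa only [mul_inv_rev, mul_assoc] using
      Subgroup.mem_center_iff.mp (mul_inv_mem_center_of_forall_conj_eq hconj) M
  exact congrArg Subtype.val hcenter.symm

end GrpBundle

namespace PreFS

variable {G U N : Type} {𝒢 : Gpd G U} {𝒩 : GrpBundle N U} (P : PreFS 𝒢 𝒩)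

def fiberHom (x : G) : 𝒩.Fiber (𝒢.s x) →* 𝒩.Fiber (𝒢.r x) :=
  MonoidHom.mk' (fun n => ⟨P.L x n.1, P.L_fib x n.1 n.2⟩)
    fun a b => Subtype.ext (P.L_mul x a.1 b.1 a.2 b.2)

theorem L_conj {x : G} {a n : N} (ha : 𝒩.p a = 𝒢.s x) (hn : 𝒩.p n = 𝒢.s x) :
    P.L x (𝒩.conj a n) = 𝒩.conj (P.L x a) (P.L x n) := by
  let A : 𝒩.Fiber (𝒢.s x) := ⟨a, ha⟩
  let M : 𝒩.Fiber (𝒢.s x) := ⟨n, hn⟩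
  have h : P.fiberHom x (A * M * A⁻¹) = P.fiberHom x A * P.fiberHom x M * (P.fiberHom x A)⁻¹ := by
    simp only [map_mul, map_inv]
  exact congrArg Subtype.val h

variable {P}

theorem L_L_eq_conj {x y : G} (hxy : 𝒢.s x = 𝒢.r y) {n : N} (hn : 𝒩.p n = 𝒢.s y) :
    P.L x (P.L y n) = 𝒩.conj (P.σ x y) (P.L (𝒢.mul x y) n) :=
  P.F1 x y n hxy hn

theorem L_L_L_eq_conj_σ_σ_mul {x y z : G} (hxy : 𝒢.s x = 𝒢.r y) (hyz : 𝒢.s y = 𝒢.r z)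
    {n : N} (hn : 𝒩.p n = 𝒢.s z) :
    P.L x (P.L y (P.L z n)) =
      𝒩.conj (P.σ x y) (𝒩.conj (P.σ (𝒢.mul x y) z) (P.L (𝒢.mul (𝒢.mul x y) z) n)) := by
  have hxy_z : 𝒢.s (𝒢.mul x y) = 𝒢.r z := (𝒢.s_mul x y hxy).trans hyz
  rw [L_L_eq_conj hxy ((P.L_fib z n hn).trans hyz.symm), L_L_eq_conj hxy_z hn]

theorem L_L_L_eq_conj_L_σ_σ_mul {x y z : G} (hxy : 𝒢.s x = 𝒢.r y) (hyz : 𝒢.s y = 𝒢.r z)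
    {n : N} (hn : 𝒩.p n = 𝒢.s z) :
    P.L x (P.L y (P.L z n)) =
      𝒩.conj (P.L x (P.σ y z)) (𝒩.conj (P.σ x (𝒢.mul y z)) (P.L (𝒢.mul x (𝒢.mul y z)) n)) := by
  have hx_yz : 𝒢.s x = 𝒢.r (𝒢.mul y z) := hxy.trans (𝒢.r_mul y z hyz).symm
  have hn' : 𝒩.p n = 𝒢.s (𝒢.mul y z) := hn.trans (𝒢.s_mul y z hyz).symm
  rw [L_L_eq_conj hyz hn, ← L_L_eq_conj hx_yz hn']
  exact P.L_conj ((P.σ_fib y z hyz).trans hxy.symm) ((P.L_fib _ n hn').trans hx_yz.symm)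

theorem conj_L_σ_σ_eq_conj_σ_σ {x y z : G} (hxy : 𝒢.s x = 𝒢.r y) (hyz : 𝒢.s y = 𝒢.r z)
    {m : N} (hm : 𝒩.p m = 𝒢.r x) :
    𝒩.conj (P.L x (P.σ y z)) (𝒩.conj (P.σ x (𝒢.mul y z)) m) =
      𝒩.conj (P.σ x y) (𝒩.conj (P.σ (𝒢.mul x y) z) m) := by
  have hxy_z : 𝒢.s (𝒢.mul x y) = 𝒢.r z := (𝒢.s_mul x y hxy).trans hyz
  have hm' : 𝒩.p m = 𝒢.r (𝒢.mul (𝒢.mul x y) z) :=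
    hm.trans ((𝒢.r_mul _ z hxy_z).trans (𝒢.r_mul x y hxy)).symm
  obtain ⟨n, hn, rfl⟩ := (P.L_bij (𝒢.mul (𝒢.mul x y) z)).surjOn hm'
  have hn' : 𝒩.p n = 𝒢.s z := hn.trans (𝒢.s_mul _ z hxy_z)
  rw [← L_L_L_eq_conj_σ_σ_mul hxy hyz hn', L_L_L_eq_conj_L_σ_σ_mul hxy hyz hn',
    𝒢.assoc x y z hxy hyz]

end PreFS

/-- If `(L,σ)` satisfies the twisted action condition (F1) (but not
necessarily (F2)), then for every composable triple `(x,y,z)` the element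
`χ(x,y,z) = L_x(σ(y,z)) σ(x,yz) σ(xy,z)⁻¹ σ(x,y)⁻¹` is central in the fiber `N_{r x}`. -/
theorem stmt11 {G U N : Type} (𝒢 : Gpd G U) (𝒩 : GrpBundle N U) (P : PreFS 𝒢 𝒩) :
    ∀ x y z, 𝒢.s x = 𝒢.r y → 𝒢.s y = 𝒢.r z →
      ∀ m, 𝒩.p m = 𝒢.r x →
        𝒩.mul (chi 𝒢 𝒩 P.L P.σ x y z) m = 𝒩.mul m (chi 𝒢 𝒩 P.L P.σ x y z) := by
  intro x y z hxy hyz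
  have hx_yz : 𝒢.s x = 𝒢.r (𝒢.mul y z) := hxy.trans (𝒢.r_mul y z hyz).symm
  have hxy_z : 𝒢.s (𝒢.mul x y) = 𝒢.r z := (𝒢.s_mul x y hxy).trans hyz
  exact GrpBundle.commute_of_forall_conj_conj_eq
    (P.L_fib x _ ((P.σ_fib y z hyz).trans hxy.symm)) (P.σ_fib x _ hx_yz)
    ((P.σ_fib _ z hxy_z).trans (𝒢.r_mul x y hxy)) (P.σ_fib x y hxy)
    (fun _ hm => P.conj_L_σ_σ_eq_conj_σ_σ hxy hyz hm)
end

section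
/- Let 𝒢 be a groupoid and ℛ a unital ring bundle over 𝒢⁽⁰⁾. Two crossed products ℛ ×_(M,τ) 𝒢 and ℛ ×_(M',τ') 𝒢 are equivalent as 𝒢-crossed products over R = ⊕_u R_u (i.e. graded-isomorphic via a map restricting to the identity on R) if and only if there exists h ∈ C¹(𝒢,ℛ^×) with M'_x = h(x)M_x(·)h(x)⁻¹ and τ'(x,y) = h(x)M_x(h(y))τ(x,y)h(xy)⁻¹; in that case (n,x) ↦ (n·h(x), x) implements the equivalence and every equivalence is of this form. -/
/-- Transport along an equality of base points of a bundle of types. -/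
def tr {U : Type} (Rf : U → Type) {u v : U} (h : u = v) (a : Rf u) : Rf v := h ▸ a

/-- A factor system `(M,τ)` for `(𝒢,ℛ)`, where `ℛ` is the unital ring bundle with fibers
`Rf u`: `M_x : R_{s x} → R_{r x}` are ring isomorphisms which are trivial on units, and
`τ(x,y) ∈ R_{r x}ˣ` is normalized and satisfies the conditions (C1) and (C2). -/
structure RingFS {G U : Type} (𝒢 : Gpd G U) (Rf : U → Type) [∀ u, Ring (Rf u)] where
  M : (x : G) → Rf (𝒢.s x) → Rf (𝒢.r x)
  τ : (x y : G) → Rf (𝒢.r x)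
  τinv : (x y : G) → Rf (𝒢.r x)
  M_add : ∀ x a b, M x (a + b) = M x a + M x b
  M_mul : ∀ x a b, M x (a * b) = M x a * M x b
  M_one : ∀ x, M x 1 = 1
  M_bij : ∀ x, Function.Bijective (M x)
  M_e : ∀ u a, M (𝒢.e u) a = tr Rf ((𝒢.s_e u).trans (𝒢.r_e u).symm) a
  τ_mul_τinv : ∀ x y, 𝒢.s x = 𝒢.r y → τ x y * τinv x y = 1
  τinv_mul_τ : ∀ x y, 𝒢.s x = 𝒢.r y → τinv x y * τ x y = 1
  τ_e_left : ∀ x, τ (𝒢.e (𝒢.r x)) x = 1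
  τ_e_right : ∀ x, τ x (𝒢.e (𝒢.s x)) = 1
  C1 : ∀ x y (h : 𝒢.s x = 𝒢.r y) (n : Rf (𝒢.s y)),
    M x (tr Rf h.symm (M y n)) =
      τ x y * tr Rf (𝒢.r_mul x y h) (M (𝒢.mul x y) (tr Rf (𝒢.s_mul x y h).symm n)) * τinv x y
  C2 : ∀ x y z (hxy : 𝒢.s x = 𝒢.r y) (hyz : 𝒢.s y = 𝒢.r z),
    τ x y * tr Rf (𝒢.r_mul x y hxy) (τ (𝒢.mul x y) z) =
      M x (tr Rf hxy.symm (τ y z)) * τ x (𝒢.mul y z)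

/-- An equivalence of the `𝒢`-crossed products `ℛ ×_(M',τ') 𝒢 → ℛ ×_(M,τ) 𝒢` over
`R = ⊕_u R_u`, described on homogeneous components: a family of additive bijections
`φ_x : R_{r x} → R_{r x}` which is the identity in degrees `u ∈ 𝒢⁽⁰⁾` (i.e. restricts to the
identity on `R`) and intertwines the products of homogeneous elements. -/
def IsCPEquiv {G U : Type} (𝒢 : Gpd G U) (Rf : U → Type) [∀ u, Ring (Rf u)]
    (F F' : RingFS 𝒢 Rf) (φ : (x : G) → Rf (𝒢.r x) → Rf (𝒢.r x)) : Prop :=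
  (∀ x, Function.Bijective (φ x)) ∧
  (∀ x a b, φ x (a + b) = φ x a + φ x b) ∧
  (∀ u a, φ (𝒢.e u) a = a) ∧
  (∀ x y (h : 𝒢.s x = 𝒢.r y) (a : Rf (𝒢.r x)) (b : Rf (𝒢.r y)),
    φ (𝒢.mul x y)
        (tr Rf (𝒢.r_mul x y h).symm (a * F'.M x (tr Rf h.symm b) * F'.τ x y)) =
      tr Rf (𝒢.r_mul x y h).symm (φ x a * F.M x (tr Rf h.symm (φ y b)) * F.τ x y))

/-!
An equivalence `φ` is determined by `h x := φ x 1`: multiplicativity on the products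
`(a, r x)(b, x)` and `(a, x)(b, s x)` with units shows that `φ x` is right multiplication by
`h x`, that `h x` is invertible (as `φ x` is bijective), and that `M'_x = h(x) M_x(·) h(x)⁻¹`;
multiplicativity on `(1, x)(1, y)` then gives the formula for `τ'`. Conversely, right
multiplication by such an `h` intertwines the products by ring algebra in the fibre over `r x`.
-/

section Transport

variable {U : Type} {Rf : U → Type}

@[simp]
theorem tr_rfl {u : U} (p : u = u) (a : Rf u) : tr Rf p a = a := rfl

@[simp]
theorem tr_tr {u v w : U} (p : u = v) (q : v = w) (a : Rf u) :
    tr Rf q (tr Rf p a) = tr Rf (p.trans q) a := by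
  subst p q; rfl

theorem tr_mul [∀ u, Ring (Rf u)] {u v : U} (p : u = v) (a b : Rf u) :
    tr Rf p (a * b) = tr Rf p a * tr Rf p b := by
  subst p; rfl

@[simp]
theorem tr_one [∀ u, Ring (Rf u)] {u v : U} (p : u = v) : tr Rf p (1 : Rf u) = 1 := by
  subst p; rfl

theorem tr_apply_congr {G : Type} {r : G → U} (φ : (x : G) → Rf (r x) → Rf (r x))
    {x y : G} (hxy : x = y) (p : r x = r y) (a : Rf (r x)) :
    tr Rf p (φ x a) = φ y (tr Rf p a) := by
  subst hxy; rfl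

end Transport

/-- `(M', τ')` is obtained from `(M, τ)` by the coboundary of `h ∈ C¹(𝒢, ℛˣ)`, with
pointwise inverse `hinv`. -/
def RingFS.IsTwistedBy {G U : Type} {𝒢 : Gpd G U} {Rf : U → Type} [∀ u, Ring (Rf u)]
    (F F' : RingFS 𝒢 Rf) (h hinv : (x : G) → Rf (𝒢.r x)) : Prop :=
  (∀ x, h x * hinv x = 1) ∧ (∀ x, hinv x * h x = 1) ∧
  (∀ u, h (𝒢.e u) = 1) ∧
  (∀ x n, F'.M x n = h x * F.M x n * hinv x) ∧
  (∀ x y (hc : 𝒢.s x = 𝒢.r y),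
    F'.τ x y = h x * F.M x (tr Rf hc.symm (h y)) * F.τ x y *
      tr Rf (𝒢.r_mul x y hc) (hinv (𝒢.mul x y)))

namespace IsCPEquiv

variable {G U : Type} {𝒢 : Gpd G U} {Rf : U → Type} [∀ u, Ring (Rf u)]
  {F F' : RingFS 𝒢 Rf} {φ : (x : G) → Rf (𝒢.r x) → Rf (𝒢.r x)}

theorem map_mul_left (hφ : IsCPEquiv 𝒢 Rf F F' φ) (x : G) (a b : Rf (𝒢.r x)) :
    φ x (a * b) = a * φ x b := by
  obtain ⟨-, -, hid, hmul⟩ := hφ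
  have H := congrArg (tr Rf (congrArg 𝒢.r (𝒢.e_mul x)))
    (hmul (𝒢.e (𝒢.r x)) x (𝒢.s_e _) (tr Rf (𝒢.r_e _).symm a) b)
  rw [tr_apply_congr φ (𝒢.e_mul x)] at H
  simpa only [F.M_e, F'.M_e, F.τ_e_left, F'.τ_e_left, hid, mul_one, ← tr_mul, tr_tr,
    tr_rfl] using H

theorem map_mul_M (hφ : IsCPEquiv 𝒢 Rf F F' φ) (x : G) (a : Rf (𝒢.r x)) (b : Rf (𝒢.s x)) :
    φ x (a * F'.M x b) = φ x a * F.M x b := by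
  obtain ⟨-, -, hid, hmul⟩ := hφ
  have H := congrArg (tr Rf (𝒢.r_mul x _ (𝒢.r_e (𝒢.s x)).symm))
    (hmul x (𝒢.e (𝒢.s x)) (𝒢.r_e _).symm a (tr Rf (𝒢.r_e _).symm b))
  rw [tr_apply_congr φ (𝒢.mul_e x)] at H
  simpa only [F.τ_e_right, F'.τ_e_right, hid, mul_one, tr_tr, tr_rfl] using H

theorem apply_eq_mul (hφ : IsCPEquiv 𝒢 Rf F F' φ) (x : G) (a : Rf (𝒢.r x)) :
    φ x a = a * φ x 1 := by
  simpa only [mul_one] using hφ.map_mul_left x a 1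

theorem exists_two_sided_inverse (hφ : IsCPEquiv 𝒢 Rf F F' φ) (x : G) :
    ∃ g : Rf (𝒢.r x), φ x 1 * g = 1 ∧ g * φ x 1 = 1 := by
  obtain ⟨g, hg⟩ := (hφ.1 x).2 1
  have hgl : g * φ x 1 = 1 := by rw [← hφ.apply_eq_mul x g, hg]
  refine ⟨g, (hφ.1 x).1 ?_, hgl⟩
  rw [hφ.apply_eq_mul x (φ x 1 * g), mul_assoc, hgl, mul_one]

theorem isTwistedBy (hφ : IsCPEquiv 𝒢 Rf F F' φ) {hinv : (x : G) → Rf (𝒢.r x)}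
    (hinv_right : ∀ x, φ x 1 * hinv x = 1) (hinv_left : ∀ x, hinv x * φ x 1 = 1) :
    F.IsTwistedBy F' (fun x => φ x 1) hinv := by
  refine ⟨hinv_right, hinv_left, fun u => hφ.2.2.1 u 1, fun x n => ?_, fun x y hc => ?_⟩
  · have H : F'.M x n * φ x 1 = φ x 1 * F.M x n := by
      rw [← hφ.apply_eq_mul, ← one_mul (F'.M x n), hφ.map_mul_M]
    rw [← H, mul_assoc, hinv_right, mul_one]
  · set p := 𝒢.r_mul x y hc
    have H := hφ.2.2.2 x y hc 1 1
    simp only [tr_one, F'.M_one, one_mul, mul_one] at H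
    rw [hφ.apply_eq_mul] at H
    have H' := congrArg (tr Rf p) H
    rw [tr_mul p] at H'
    simp only [tr_tr, tr_rfl] at H'
    rw [← H', mul_assoc, ← tr_mul, hinv_right, tr_one, mul_one]

end IsCPEquiv

theorem RingFS.IsTwistedBy.isCPEquiv {G U : Type} {𝒢 : Gpd G U} {Rf : U → Type}
    [∀ u, Ring (Rf u)] {F F' : RingFS 𝒢 Rf} {h hinv : (x : G) → Rf (𝒢.r x)}
    (hh : F.IsTwistedBy F' h hinv) : IsCPEquiv 𝒢 Rf F F' (fun x a => a * h x) := by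
  obtain ⟨h_hinv, hinv_h, h_e, hM, hτ⟩ := hh
  refine ⟨fun x => ⟨fun a b hab => ?_, fun c => ⟨c * hinv x, ?_⟩⟩,
    fun x a b => add_mul a b (h x), fun u a => by simp only [h_e, mul_one], ?_⟩
  · simpa only [mul_assoc, h_hinv, mul_one] using congrArg (· * hinv x) hab
  · simp only [mul_assoc, hinv_h, mul_one]
  · intro x y hc a b
    set p := 𝒢.r_mul x y hc
    have hxy : h (𝒢.mul x y) = tr Rf p.symm (tr Rf p (h (𝒢.mul x y))) := by simp
    beta_reduce
    rw [hxy, ← tr_mul, hM, hτ x y hc, tr_mul hc.symm b, F.M_mul]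
    congr 1
    have hinv_h_mul (z : Rf (𝒢.r x)) : hinv x * (h x * z) = z := by
      rw [← mul_assoc, hinv_h, one_mul]
    simp only [mul_assoc, ← tr_mul, hinv_h, hinv_h_mul, tr_one, mul_one]

/-- Two `𝒢`-crossed products `ℛ ×_(M,τ) 𝒢` and `ℛ ×_(M',τ') 𝒢` over
`R = ⊕_u R_u` are equivalent iff there is `h ∈ C¹(𝒢,ℛ^×)` with
`M'_x = h(x) M_x(·) h(x)⁻¹` and `τ'(x,y) = h(x) M_x(h(y)) τ(x,y) h(xy)⁻¹`; in that case
`a ↦ a·h(x)` implements the equivalence and every equivalence is of this form. -/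
theorem stmt19 {G U : Type} (𝒢 : Gpd G U) (Rf : U → Type) [∀ u, Ring (Rf u)]
    (F F' : RingFS 𝒢 Rf) :
    ((∃ φ, IsCPEquiv 𝒢 Rf F F' φ) ↔
      ∃ h hinv : (x : G) → Rf (𝒢.r x),
        (∀ x, h x * hinv x = 1) ∧ (∀ x, hinv x * h x = 1) ∧
        (∀ u, h (𝒢.e u) = 1) ∧
        (∀ x n, F'.M x n = h x * F.M x n * hinv x) ∧
        (∀ x y (hc : 𝒢.s x = 𝒢.r y),
          F'.τ x y = h x * F.M x (tr Rf hc.symm (h y)) * F.τ x y *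
            tr Rf (𝒢.r_mul x y hc) (hinv (𝒢.mul x y)))) ∧
    (∀ φ, IsCPEquiv 𝒢 Rf F F' φ →
      ∃ h hinv : (x : G) → Rf (𝒢.r x),
        (∀ x, h x * hinv x = 1) ∧ (∀ x, hinv x * h x = 1) ∧
        (∀ u, h (𝒢.e u) = 1) ∧
        (∀ x n, F'.M x n = h x * F.M x n * hinv x) ∧
        (∀ x y (hc : 𝒢.s x = 𝒢.r y),
          F'.τ x y = h x * F.M x (tr Rf hc.symm (h y)) * F.τ x y *
            tr Rf (𝒢.r_mul x y hc) (hinv (𝒢.mul x y))) ∧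
        (∀ x a, φ x a = a * h x)) := by
  refine ⟨⟨fun ⟨φ, hφ⟩ => ?_, fun ⟨h, hinv, hh⟩ => ⟨_, RingFS.IsTwistedBy.isCPEquiv hh⟩⟩,
    fun φ hφ => ?_⟩ <;>
    choose hinv hinv_right hinv_left using hφ.exists_two_sided_inverse
  · exact ⟨_, hinv, hφ.isTwistedBy hinv_right hinv_left⟩
  · obtain ⟨h_hinv, hinv_h, h_e, hM, hτ⟩ := hφ.isTwistedBy hinv_right hinv_left
    exact ⟨_, hinv, h_hinv, hinv_h, h_e, hM, hτ, hφ.apply_eq_mul⟩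
end
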